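/- Let a ∈ C(ℝ,ℝ), let d, 𝔦 ∈ ℕ with 2 ≤ 𝔦 ≤ 2d, let 𝕀 be a neural network with architecture (d, 𝔦, d) and realization equal to the identity on ℝ^d, and let Φ₁, Φ₂ be networks with input and output dimension d, depths L₁, L₂, and architectures (l_{1,0},...,l_{1,L₁}) and (l_{2,0},...,l_{2,L₂}), respectively, with l_{2,L₂-1} ≤ l_{1,L₁-1} + 𝔦. Then there exists a neural network Ψ such that: (i) R_a(Ψ) ∈ C(ℝ^d, ℝ^d); (ii) for all x ∈ ℝ^d, (R_a(Ψ))(x) = (R_a(Φ₂))(x) + ((R_a(Φ₁)) ∘ (R_a(Φ₂)))(x); (iii) the penultimate layer width of Ψ is at most l_{1,L₁-1} + 𝔦; and (iv) P(Ψ) ≤ P(Φ₂) + (½ P(𝕀) + P(Φ₁))². -/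

import Mathlib

/-
`Ψ` is `Φ₂` followed by a block `Γ` computing `z ↦ z + R_a(Φ₁)(z)`, where the first affine layer
of `Γ` is merged into the last one of `Φ₂`. In general `Γ` runs `Φ₁` side by side with the
`(L₁ - 1)`-fold composition of `𝕀`, which realizes the identity and has hidden widths `𝔦`, and adds
the two outputs in its last layer; so `Γ` has the widths of `Φ₁` with `𝔦` added to each hidden one.
With `S = ∑_{k ≥ 1} l_{1,k}`, the cost of `Γ` is at most `P(Φ₁) + 2𝔦S + L₁𝔦(𝔦 + 1)` plus the merged
layer, and `2S ≤ P(Φ₁)`, `L₁ ≤ S`, `𝔦 ≤ 2d` turn this into the square bound.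
If `Φ₁` has depth one or a hidden layer of width zero, `R_a(Φ₁)` is affine and `Γ` is a single
affine layer, absorbed into `Φ₂` at no cost.
-/

/-- A feedforward neural network: `hidden + 1` affine layers (`depth = hidden + 1`),
layer widths `dims 0, dims 1, ..., dims depth`, weights `W k i j` and biases `B k i`
for layer `k` (entries outside the relevant ranges are irrelevant). -/
structure ANN where
  hidden : ℕ
  dims : ℕ → ℕ
  W : ℕ → ℕ → ℕ → ℝ
  B : ℕ → ℕ → ℝ

namespace ANN

/-- The depth (number of affine layers) of a network. -/
def depth (Φ : ANN) : ℕ := Φ.hidden + 1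

/-- The affine map of layer `k`. -/
def layer (Φ : ANN) (k : ℕ) (x : ℕ → ℝ) : ℕ → ℝ :=
  fun i => (∑ j ∈ Finset.range (Φ.dims k), Φ.W k i j * x j) + Φ.B k i

/-- Forward pass through the first `k` layers, each followed by the componentwise
activation `a`. -/
def fwd (a : ℝ → ℝ) (Φ : ANN) : ℕ → (ℕ → ℝ) → (ℕ → ℝ)
  | 0, x => x
  | k + 1, x => fun i => a (Φ.layer k (Φ.fwd a k x) i)

/-- The realization of a network: all hidden layers with activation `a`, and the final
affine layer without activation. -/
def realize (a : ℝ → ℝ) (Φ : ANN) (x : ℕ → ℝ) : ℕ → ℝ :=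
  Φ.layer Φ.hidden (Φ.fwd a Φ.hidden x)

/-- The realization as a function `ℝ^n → ℝ^m`. -/
def realizeFun (a : ℝ → ℝ) (Φ : ANN) (n m : ℕ) (x : Fin n → ℝ) : Fin m → ℝ :=
  fun i => Φ.realize a (fun j => if h : j < n then x ⟨j, h⟩ else 0) i

/-- Number of parameters: `∑_{k=1}^{L} l_k (l_{k-1} + 1)`. -/
def params (Φ : ANN) : ℕ :=
  ∑ k ∈ Finset.range (Φ.hidden + 1), Φ.dims (k + 1) * (Φ.dims k + 1)

/-- The architecture `(l_0, l_1, ..., l_L)` of a network. -/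
def arch (Φ : ANN) : List ℕ := (List.range (Φ.depth + 1)).map Φ.dims

end ANN

open Finset

theorem four_mul_add_mul_le_sq {p s n x y c d : ℕ} (hp : 2 * s ≤ p) (hn : 2 ≤ n) (hns : n ≤ s)
    (hx : x ≤ s) (hy : y ≤ s) (hc : 2 ≤ c) (hcd : c ≤ 2 * d) :
    4 * (p + 2 * c * s + n * (c * (c + 1)) + (x + c) * (y + c + 1))
      ≤ (c * (d + 1) + d * (c + 1) + 2 * p) ^ 2 := by
  have hxy : (x + c) * (y + c + 1) ≤ (s + c) * (s + c + 1) := by gcongr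
  have hn' : n * (c * (c + 1)) ≤ s * (c * (c + 1)) := by gcongr
  have hX : c * c + c + d ≤ c * (d + 1) + d * (c + 1) := by nlinarith
  set X := c * (d + 1) + d * (c + 1)
  have h3 : (c * c + c + d) * (2 * s) ≤ X * p := Nat.mul_le_mul hX hp
  have h4 : (2 * s) * (2 * s) ≤ p * p := Nat.mul_le_mul hp hp
  have h5 : 2 * c * s ≤ c * c * s + s := by nlinarith [sq_nonneg ((c : ℤ) - 1)]
  have h6 : c * s ≤ 2 * d * s := Nat.mul_le_mul_right s hcd
  have h7 : 4 * c * c + 4 * c ≤ X * X := by nlinarith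
  have h8 : 2 * s ≤ s * s := by nlinarith
  nlinarith

section Widths

variable (l : ℕ → ℕ) (n : ℕ)

theorem sum_range_add_mul_add_add_one (c : ℕ) (h : l 0 = l n) :
    ∑ k ∈ range n, (l (k + 1) + c) * (l k + c + 1)
      = ∑ k ∈ range n, l (k + 1) * (l k + 1) + 2 * c * ∑ k ∈ range n, l (k + 1)
        + n * (c * (c + 1)) := by
  have hshift : ∑ k ∈ range n, l k = ∑ k ∈ range n, l (k + 1) := by
    have := (sum_range_succ l n).symm.trans (sum_range_succ' l n)
    omega
  calc ∑ k ∈ range n, (l (k + 1) + c) * (l k + c + 1)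
      = ∑ k ∈ range n, (l (k + 1) * (l k + 1) + c * l (k + 1) + c * l k + c * (c + 1)) :=
        sum_congr rfl fun k _ => by ring
    _ = _ := by
        simp only [sum_add_distrib, ← mul_sum, hshift, sum_const, card_range, smul_eq_mul]
        ring

variable {l n}

theorem two_mul_sum_le_sum_mul_add_one (hpos : ∀ k ≤ n, 1 ≤ l k) :
    2 * ∑ k ∈ range n, l (k + 1) ≤ ∑ k ∈ range n, l (k + 1) * (l k + 1) := by
  rw [mul_sum]
  exact sum_le_sum fun k hk => by
    have := hpos k (mem_range.mp hk).le
    nlinarith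

theorem le_sum_range_of_one_le (hpos : ∀ k ≤ n, 1 ≤ l k) : n ≤ ∑ k ∈ range n, l (k + 1) := by
  simpa using card_nsmul_le_sum (range n) (fun k => l (k + 1)) 1
    fun k hk => hpos (k + 1) (mem_range.mp hk)

end Widths

theorem single_le_sum_range_succ (l : ℕ → ℕ) {n k : ℕ} (h1 : 1 ≤ k) (hk : k ≤ n) :
    l k ≤ ∑ k ∈ range n, l (k + 1) := by
  obtain ⟨j, rfl⟩ := Nat.exists_eq_add_of_le' h1
  exact single_le_sum (f := fun k => l (k + 1)) (fun _ _ => Nat.zero_le _) (mem_range.mpr hk)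

namespace ANN

variable (a : ℝ → ℝ)

theorem layer_congr (Φ : ANN) (k : ℕ) {x y : ℕ → ℝ} (h : ∀ j < Φ.dims k, x j = y j) :
    Φ.layer k x = Φ.layer k y := by
  funext i
  simp only [layer]
  congr 1
  exact sum_congr rfl fun j hj => by rw [h j (mem_range.mp hj)]

theorem fwd_add_congr (Φ : ANN) {t : ℕ} {x y : ℕ → ℝ} (h : Φ.fwd a t x = Φ.fwd a t y) :
    ∀ s, Φ.fwd a (t + s) x = Φ.fwd a (t + s) y
  | 0 => h
  | s + 1 => by rw [← add_assoc]; simp only [fwd, fwd_add_congr Φ h s]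

theorem realize_congr_of_fwd (Φ : ANN) {t : ℕ} (ht : t ≤ Φ.hidden) {x y : ℕ → ℝ}
    (h : ∀ j < Φ.dims t, Φ.fwd a t x j = Φ.fwd a t y j) : Φ.realize a x = Φ.realize a y := by
  rcases ht.lt_or_eq with ht | ht
  · obtain ⟨s, hs⟩ := Nat.exists_eq_add_of_lt ht
    have hsucc : Φ.fwd a (t + 1) x = Φ.fwd a (t + 1) y := by
      funext i
      simp only [fwd, layer_congr Φ t h]
    rw [realize, realize, hs, add_right_comm, fwd_add_congr a Φ hsucc s]
  · rw [realize, realize, ← ht]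
    exact layer_congr Φ t h

theorem realize_congr (Φ : ANN) {x y : ℕ → ℝ} (h : ∀ j < Φ.dims 0, x j = y j) :
    Φ.realize a x = Φ.realize a y :=
  realize_congr_of_fwd a Φ (Nat.zero_le _) h

theorem realize_eq_of_dims_eq_zero (Φ : ANN) {t : ℕ} (ht : t ≤ Φ.hidden) (h0 : Φ.dims t = 0)
    (x y : ℕ → ℝ) : Φ.realize a x = Φ.realize a y :=
  realize_congr_of_fwd a Φ ht fun j hj => absurd hj (by omega)

theorem realize_eq_realizeFun (Φ : ANN) {n : ℕ} (hn : Φ.dims 0 = n) (m : ℕ) (z : ℕ → ℝ)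
    (i : Fin m) : Φ.realize a z i = Φ.realizeFun a n m (fun j => z j) i :=
  congrFun (realize_congr a Φ fun j hj => by simp [hn ▸ hj]) i

theorem continuous_layer (Φ : ANN) (k : ℕ) : Continuous (Φ.layer k) := by
  unfold layer
  fun_prop

theorem continuous_fwd (ha : Continuous a) (Φ : ANN) : ∀ k, Continuous (Φ.fwd a k)
  | 0 => continuous_id
  | k + 1 => continuous_pi fun i =>
      ha.comp ((continuous_apply i).comp ((continuous_layer Φ k).comp (continuous_fwd ha Φ k)))

theorem continuous_realizeFun (ha : Continuous a) (Φ : ANN) (n m : ℕ) :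
    Continuous (Φ.realizeFun a n m) := by
  have hpad : Continuous fun (x : Fin n → ℝ) (j : ℕ) => if h : j < n then x ⟨j, h⟩ else 0 := by
    refine continuous_pi fun j => ?_
    split_ifs <;> fun_prop
  exact continuous_pi fun i => (continuous_apply (i : ℕ)).comp
    ((continuous_layer Φ _).comp ((continuous_fwd a ha Φ _).comp hpad))

/-- Composition `Γ ∘ Φ`, merging the last affine layer of `Φ` into the first one of `Γ`. -/
def comp (Φ Γ : ANN) : ANN where
  hidden := Φ.hidden + Γ.hidden
  dims k := if k ≤ Φ.hidden then Φ.dims k else Γ.dims (k - Φ.hidden)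
  W k i j :=
    if k < Φ.hidden then Φ.W k i j
    else if k = Φ.hidden then ∑ m ∈ range (Γ.dims 0), Γ.W 0 i m * Φ.W Φ.hidden m j
    else Γ.W (k - Φ.hidden) i j
  B k i :=
    if k < Φ.hidden then Φ.B k i
    else if k = Φ.hidden then (∑ m ∈ range (Γ.dims 0), Γ.W 0 i m * Φ.B Φ.hidden m) + Γ.B 0 i
    else Γ.B (k - Φ.hidden) i

section comp

variable (Φ Γ : ANN)

theorem dims_comp_of_le {k : ℕ} (h : k ≤ Φ.hidden) : (comp Φ Γ).dims k = Φ.dims k := by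
  simp [comp, h]

theorem dims_comp_add (t : ℕ) : (comp Φ Γ).dims (Φ.hidden + (t + 1)) = Γ.dims (t + 1) := by
  simp [comp]

theorem fwd_comp_of_le (z : ℕ → ℝ) : ∀ k ≤ Φ.hidden, (comp Φ Γ).fwd a k z = Φ.fwd a k z
  | 0, _ => rfl
  | k + 1, hk => by
    have hlt : k < Φ.hidden := hk
    funext i
    simp only [fwd, layer, fwd_comp_of_le z k hlt.le, dims_comp_of_le Φ Γ hlt.le]
    simp [comp, hlt]

theorem layer_comp_hidden (v : ℕ → ℝ) :
    (comp Φ Γ).layer Φ.hidden v = Γ.layer 0 (Φ.layer Φ.hidden v) := by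
  funext i
  simp only [layer, comp, lt_irrefl, if_false, if_true, le_refl]
  simp only [mul_add, mul_sum, sum_add_distrib, sum_mul, ← add_assoc]
  rw [sum_comm]
  ring_nf

theorem layer_comp_add (t : ℕ) :
    (comp Φ Γ).layer (Φ.hidden + (t + 1)) = Γ.layer (t + 1) := by
  funext v i
  simp [layer, comp]

theorem fwd_comp_add (z : ℕ → ℝ) :
    ∀ t, (comp Φ Γ).fwd a (Φ.hidden + (t + 1)) z = Γ.fwd a (t + 1) (Φ.realize a z)
  | 0 => by
    funext i
    simp only [fwd, fwd_comp_of_le a Φ Γ z _ le_rfl, layer_comp_hidden, realize]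
  | t + 1 => by
    rw [← add_assoc, fwd, fwd, fwd_comp_add z t, layer_comp_add]

theorem realize_comp (z : ℕ → ℝ) : (comp Φ Γ).realize a z = Γ.realize a (Φ.realize a z) := by
  have hh : (comp Φ Γ).hidden = Φ.hidden + Γ.hidden := rfl
  rw [realize, realize, hh]
  rcases Γ.hidden with _ | s
  · rw [add_zero, fwd_comp_of_le a Φ Γ z _ le_rfl, layer_comp_hidden]
    rfl
  · rw [fwd_comp_add, layer_comp_add]

end comp

theorem params_comp (Φ Γ : ANN) :
    (comp Φ Γ).params + Φ.dims (Φ.hidden + 1) * (Φ.dims Φ.hidden + 1) + Γ.dims 1 * (Γ.dims 0 + 1)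
      = Φ.params + Γ.params + Γ.dims 1 * (Φ.dims Φ.hidden + 1) := by
  have hh : (comp Φ Γ).hidden + 1 = Φ.hidden + (Γ.hidden + 1) := by simp [comp, add_assoc]
  have hlow : ∀ k ∈ range Φ.hidden, (comp Φ Γ).dims (k + 1) * ((comp Φ Γ).dims k + 1)
      = Φ.dims (k + 1) * (Φ.dims k + 1) := fun k hk => by
    rw [dims_comp_of_le _ _ (mem_range.mp hk), dims_comp_of_le _ _ (mem_range.mp hk).le]
  have hhigh : ∀ t ∈ range Γ.hidden,
      (comp Φ Γ).dims (Φ.hidden + (t + 1) + 1) * ((comp Φ Γ).dims (Φ.hidden + (t + 1)) + 1)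
        = Γ.dims (t + 1 + 1) * (Γ.dims (t + 1) + 1) := fun t _ => by
    rw [add_assoc, dims_comp_add, dims_comp_add]
  rw [params, params, params, hh, sum_range_add, sum_range_succ', sum_range_succ _ Φ.hidden,
    sum_range_succ' _ Γ.hidden, sum_congr rfl hlow, sum_congr rfl hhigh, add_zero,
    dims_comp_add Φ Γ 0, dims_comp_of_le Φ Γ le_rfl]
  ring

theorem dims_comp_hidden_of_hidden_eq_zero (Φ Γ : ANN) (h : Γ.hidden = 0) :
    (comp Φ Γ).dims (comp Φ Γ).hidden = Φ.dims Φ.hidden := by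
  change (comp Φ Γ).dims (Φ.hidden + Γ.hidden) = _
  rw [h]
  exact dims_comp_of_le Φ Γ le_rfl

theorem dims_comp_hidden_of_hidden_eq_succ (Φ Γ : ANN) {s : ℕ} (h : Γ.hidden = s + 1) :
    (comp Φ Γ).dims (comp Φ Γ).hidden = Γ.dims Γ.hidden := by
  change (comp Φ Γ).dims (Φ.hidden + Γ.hidden) = _
  rw [h]
  exact dims_comp_add Φ Γ s

theorem dims_comp_depth (Φ Γ : ANN) : (comp Φ Γ).dims (comp Φ Γ).depth = Γ.dims Γ.depth :=
  dims_comp_add Φ Γ Γ.hidden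

theorem params_comp_of_hidden_eq_zero (Φ Γ : ANN) (h0 : Γ.hidden = 0)
    (h1 : Γ.dims 1 = Φ.dims (Φ.hidden + 1)) : (comp Φ Γ).params = Φ.params := by
  have hcomp := params_comp Φ Γ
  have hΓ : Γ.params = Γ.dims 1 * (Γ.dims 0 + 1) := by simp [params, h0]
  rw [hΓ, h1] at hcomp
  linarith

/-- The `(n + 1)`-fold composition `I ∘ ⋯ ∘ I`. -/
def iterComp (I : ANN) : ℕ → ANN
  | 0 => I
  | n + 1 => comp (iterComp I n) I

section iterComp

variable {I : ANN}

theorem hidden_iterComp (hI : I.hidden = 1) : ∀ n, (iterComp I n).hidden = n + 1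
  | 0 => hI
  | n + 1 => by simp [iterComp, comp, hidden_iterComp hI n, hI]

theorem dims_iterComp_zero : ∀ n, (iterComp I n).dims 0 = I.dims 0
  | 0 => rfl
  | n + 1 => (dims_comp_of_le _ _ (Nat.zero_le _)).trans (dims_iterComp_zero n)

theorem dims_iterComp_of_pos_of_le (hI : I.hidden = 1) :
    ∀ n {k}, 1 ≤ k → k ≤ n + 1 → (iterComp I n).dims k = I.dims 1
  | 0, k, h1, h2 => by rw [show k = 1 by omega]; rfl
  | n + 1, k, h1, h2 => by
    rcases (show k ≤ n + 1 ∨ k = n + 2 by omega) with hk | rfl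
    · rw [iterComp, dims_comp_of_le _ _ (by rwa [hidden_iterComp hI]),
        dims_iterComp_of_pos_of_le hI n h1 hk]
    · have := dims_comp_add (iterComp I n) I 0
      rwa [hidden_iterComp hI] at this

theorem realize_iterComp {d : ℕ} (hI : ∀ z, ∀ i < d, I.realize a z i = z i) :
    ∀ n z, ∀ i < d, (iterComp I n).realize a z i = z i
  | 0 => hI
  | n + 1 => fun z i hi => by
    rw [iterComp, realize_comp, hI _ i hi, realize_iterComp hI n z i hi]

end iterComp

/-- `F` and `G` run side by side on a shared input, with their outputs added. Hidden layer `t`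
holds the neurons of `F` at indices `< F.dims t`, followed by those of `G`; intended for
`G.hidden = F.hidden ≥ 1` and `G.dims 0 = F.dims 0`. -/
def parSum (F G : ANN) : ANN where
  hidden := F.hidden
  dims t := if 1 ≤ t ∧ t ≤ F.hidden then F.dims t + G.dims t else F.dims t
  W k i j :=
    if k = 0 then (if i < F.dims 1 then F.W 0 i j else G.W 0 (i - F.dims 1) j)
    else if k = F.hidden then (if j < F.dims k then F.W k i j else G.W k i (j - F.dims k))
    else if i < F.dims (k + 1) then (if j < F.dims k then F.W k i j else 0)
    else if j < F.dims k then 0 else G.W k (i - F.dims (k + 1)) (j - F.dims k)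
  B k i :=
    if k = 0 then (if i < F.dims 1 then F.B 0 i else G.B 0 (i - F.dims 1))
    else if k = F.hidden then F.B k i + G.B k i
    else if i < F.dims (k + 1) then F.B k i else G.B k (i - F.dims (k + 1))

section parSum

variable {F G : ANN}

theorem dims_parSum_of_pos_of_le {t : ℕ} (h1 : 1 ≤ t) (h2 : t ≤ F.hidden) :
    (parSum F G).dims t = F.dims t + G.dims t := by
  simp [parSum, h1, h2]

theorem hidden_parSum : (parSum F G).hidden = F.hidden := rfl

theorem dims_parSum_depth : (parSum F G).dims (parSum F G).depth = F.dims F.depth := by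
  simp [parSum, depth]

theorem dims_parSum_le {c : ℕ} (hG : ∀ t, 1 ≤ t → t ≤ F.hidden → G.dims t = c) (t : ℕ) :
    (parSum F G).dims t ≤ F.dims t + c := by
  by_cases ht : 1 ≤ t ∧ t ≤ F.hidden
  · rw [dims_parSum_of_pos_of_le ht.1 ht.2, hG t ht.1 ht.2]
  · simp [parSum, ht]

theorem layer_parSum_zero_left (v : ℕ → ℝ) {i : ℕ} (hi : i < F.dims 1) :
    (parSum F G).layer 0 v i = F.layer 0 v i := by
  simp [layer, parSum, hi]

theorem layer_parSum_zero_right (hG : G.dims 0 = F.dims 0) (v : ℕ → ℝ) (i : ℕ) :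
    (parSum F G).layer 0 v (F.dims 1 + i) = G.layer 0 v i := by
  simp [layer, parSum, hG]

theorem layer_parSum_left {k : ℕ} (hk0 : k ≠ 0) (hk : k < F.hidden) (v : ℕ → ℝ) {i : ℕ}
    (hi : i < F.dims (k + 1)) : (parSum F G).layer k v i = F.layer k v i := by
  simp only [layer, dims_parSum_of_pos_of_le (Nat.one_le_iff_ne_zero.mpr hk0) hk.le, sum_range_add]
  simp only [parSum, if_neg hk0, if_neg hk.ne, if_pos hi, ite_mul]
  rw [sum_ite_of_true (fun j hj => mem_range.mp hj)]
  simp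

theorem layer_parSum_right {k : ℕ} (hk0 : k ≠ 0) (hk : k < F.hidden) (v : ℕ → ℝ) (i : ℕ) :
    (parSum F G).layer k v (F.dims (k + 1) + i) = G.layer k (fun j => v (F.dims k + j)) i := by
  simp only [layer, dims_parSum_of_pos_of_le (Nat.one_le_iff_ne_zero.mpr hk0) hk.le, sum_range_add]
  simp only [parSum, if_neg hk0, if_neg hk.ne, add_lt_iff_neg_left, not_lt_zero, if_false,
    ite_mul]
  rw [sum_ite_of_true (fun j hj => mem_range.mp hj)]
  simp

theorem layer_parSum_hidden (h1 : 1 ≤ F.hidden) (v : ℕ → ℝ) (i : ℕ) :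
    (parSum F G).layer F.hidden v i
      = F.layer F.hidden v i + G.layer F.hidden (fun j => v (F.dims F.hidden + j)) i := by
  simp only [layer, dims_parSum_of_pos_of_le h1 le_rfl, sum_range_add]
  simp only [parSum, if_neg (by omega : F.hidden ≠ 0), if_true, ite_mul]
  rw [sum_ite_of_true (fun j hj => mem_range.mp hj)]
  simp only [add_lt_iff_neg_left, not_lt_zero, if_false, add_tsub_cancel_left]
  ring

theorem fwd_parSum (hG : G.dims 0 = F.dims 0) (z : ℕ → ℝ) {t : ℕ} (h1 : 1 ≤ t)
    (ht : t ≤ F.hidden) :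
    (∀ j < F.dims t, (parSum F G).fwd a t z j = F.fwd a t z j) ∧
      ∀ j, (parSum F G).fwd a t z (F.dims t + j) = G.fwd a t z j := by
  induction t, h1 using Nat.le_induction with
  | base =>
    exact ⟨fun j hj => congrArg a (layer_parSum_zero_left z hj),
      fun j => congrArg a (layer_parSum_zero_right hG z j)⟩
  | succ t h1 ih =>
    obtain ⟨hleft, hright⟩ := ih (by omega)
    have hk0 : t ≠ 0 := by omega
    refine ⟨fun j hj => congrArg a ?_, fun j => congrArg a ?_⟩
    · rw [layer_parSum_left hk0 (by omega) _ hj]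
      exact congrFun (layer_congr F t hleft) j
    · rw [layer_parSum_right hk0 (by omega)]
      simp only [hright]

theorem realize_parSum (hG0 : G.dims 0 = F.dims 0) (hGh : G.hidden = F.hidden)
    (h1 : 1 ≤ F.hidden) (z : ℕ → ℝ) (i : ℕ) :
    (parSum F G).realize a z i = F.realize a z i + G.realize a z i := by
  obtain ⟨hleft, hright⟩ := fwd_parSum a hG0 z h1 le_rfl
  simp only [realize, hGh]
  rw [hidden_parSum, layer_parSum_hidden h1, layer_congr F F.hidden hleft]
  simp only [hright]

end parSum

section skipBlock

variable {I F : ANN} {m : ℕ}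

theorem realize_parSum_iterComp (hIh : I.hidden = 1) (hFh : F.hidden = m + 1)
    (hI0 : I.dims 0 = F.dims 0) {d : ℕ} (hI : ∀ z, ∀ i < d, I.realize a z i = z i) (z : ℕ → ℝ)
    {i : ℕ} (hi : i < d) : (parSum F (iterComp I m)).realize a z i = z i + F.realize a z i := by
  rw [realize_parSum a ((dims_iterComp_zero m).trans hI0) (by rw [hidden_iterComp hIh, hFh])
    (by omega), realize_iterComp a hI m z i hi, add_comm]

theorem dims_parSum_iterComp_le (hIh : I.hidden = 1) (hFh : F.hidden = m + 1) (k : ℕ) :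
    (parSum F (iterComp I m)).dims k ≤ F.dims k + I.dims 1 :=
  dims_parSum_le (fun _ h1 h2 => dims_iterComp_of_pos_of_le hIh m h1 (by omega)) k

theorem dims_parSum_iterComp_hidden (hIh : I.hidden = 1) (hFh : F.hidden = m + 1) :
    (parSum F (iterComp I m)).dims F.hidden = F.dims F.hidden + I.dims 1 := by
  rw [dims_parSum_of_pos_of_le (by omega) le_rfl,
    dims_iterComp_of_pos_of_le hIh m (by omega) (by omega)]

end skipBlock

def affineSkip (d : ℕ) (A : ℕ → ℕ → ℝ) (b : ℕ → ℝ) : ANN :=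
  ⟨0, fun _ => d, fun _ i j => (if i = j then 1 else 0) + A i j, fun _ => b⟩

theorem realize_affineSkip {d : ℕ} (A : ℕ → ℕ → ℝ) (b z : ℕ → ℝ) {i : ℕ} (hi : i < d) :
    (affineSkip d A b).realize a z i = z i + (∑ j ∈ range d, A i j * z j + b i) := by
  simp [realize, layer, fwd, affineSkip, add_mul, sum_add_distrib, hi, add_assoc]

theorem exists_realize_eq_affine {Φ : ANN} {d : ℕ} (h0 : Φ.dims 0 = d)
    (hdeg : Φ.hidden = 0 ∨ ∃ t ≤ Φ.hidden, Φ.dims t = 0) :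
    ∃ (A : ℕ → ℕ → ℝ) (b : ℕ → ℝ), ∀ z i, Φ.realize a z i = ∑ j ∈ range d, A i j * z j + b i := by
  rcases hdeg with hh | ⟨t, ht, hdt⟩
  · refine ⟨Φ.W 0, Φ.B 0, fun z i => ?_⟩
    simp [realize, layer, hh, fwd, h0]
  · exact ⟨0, Φ.realize a 0, fun z i => by
      simp [realize_eq_of_dims_eq_zero a Φ ht hdt z 0]⟩

theorem params_le_of_dims_le {Φ Γ : ANN} {c : ℕ} (hh : Γ.hidden = Φ.hidden)
    (hd : ∀ k, Γ.dims k ≤ Φ.dims k + c) :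
    Γ.params ≤ ∑ k ∈ range (Φ.hidden + 1), (Φ.dims (k + 1) + c) * (Φ.dims k + c + 1) := by
  rw [params, hh]
  exact sum_le_sum fun k _ => Nat.mul_le_mul (hd _) (by have := hd k; omega)

theorem four_mul_params_comp_le {Φ₁ Φ₂ Γ : ANN} {c d : ℕ} (hc : 2 ≤ c) (hcd : c ≤ 2 * d)
    (h1 : 1 ≤ Φ₁.hidden) (hpos : ∀ k ≤ Φ₁.hidden, Φ₁.dims k ≠ 0) (h0 : Φ₁.dims 0 = d)
    (hL : Φ₁.dims (Φ₁.hidden + 1) = d) (hΓh : Γ.hidden = Φ₁.hidden)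
    (hΓ : ∀ k, Γ.dims k ≤ Φ₁.dims k + c) (hwidth : Φ₂.dims Φ₂.hidden ≤ Φ₁.dims Φ₁.hidden + c) :
    4 * (comp Φ₂ Γ).params ≤ 4 * Φ₂.params + (c * (d + 1) + d * (c + 1) + 2 * Φ₁.params) ^ 2 := by
  have hpos' : ∀ k ≤ Φ₁.hidden + 1, 1 ≤ Φ₁.dims k := fun k hk => by
    rcases hk.lt_or_eq with hk | rfl
    · exact Nat.one_le_iff_ne_zero.mpr (hpos k (by omega))
    · omega
  have hcomp := params_comp Φ₂ Γ
  have hΓp := params_le_of_dims_le hΓh hΓ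
  rw [sum_range_add_mul_add_add_one _ _ c (h0.trans hL.symm)] at hΓp
  have hfirst : Γ.dims 1 * (Φ₂.dims Φ₂.hidden + 1) ≤ (Φ₁.dims 1 + c) * (Φ₁.dims Φ₁.hidden + c + 1) :=
    Nat.mul_le_mul (hΓ 1) (by omega)
  have := four_mul_add_mul_le_sq (two_mul_sum_le_sum_mul_add_one hpos') (by omega)
    (le_sum_range_of_one_le hpos') (single_le_sum_range_succ Φ₁.dims le_rfl (by omega))
    (single_le_sum_range_succ Φ₁.dims h1 (by omega)) hc hcd
  have hP : ∑ k ∈ range (Φ₁.hidden + 1), Φ₁.dims (k + 1) * (Φ₁.dims k + 1) = Φ₁.params := rfl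
  rw [hP] at hΓp this
  linarith [Nat.zero_le (Φ₂.dims (Φ₂.hidden + 1) * (Φ₂.dims Φ₂.hidden + 1)),
    Nat.zero_le (Γ.dims 1 * (Γ.dims 0 + 1))]

theorem dims_of_arch_eq {Φ : ANN} {p q r : ℕ} (h : Φ.arch = [p, q, r]) :
    Φ.hidden = 1 ∧ Φ.dims 0 = p ∧ Φ.dims 1 = q ∧ Φ.dims 2 = r := by
  have hh : Φ.hidden = 1 := by
    simpa [arch, depth] using congrArg List.length h
  simp only [arch, depth, hh] at h
  simp_all [List.range_succ]

theorem realizeFun_comp_eq_add {Φ₁ Φ₂ Γ : ANN} {d : ℕ} (h1in : Φ₁.dims 0 = d)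
    (hΓ : ∀ z, ∀ i < d, Γ.realize a z i = z i + Φ₁.realize a z i) (x : Fin d → ℝ) :
    (comp Φ₂ Γ).realizeFun a d d x
      = fun i => Φ₂.realizeFun a d d x i + Φ₁.realizeFun a d d (Φ₂.realizeFun a d d x) i := by
  funext i
  rw [realizeFun, realize_comp, hΓ _ _ i.isLt, realize_eq_realizeFun a Φ₁ h1in]
  rfl

end ANN

open ANN

theorem composition_sum_general (a : ℝ → ℝ) (ha : Continuous a) (d i₀ : ℕ)
    (hi₀ : 2 ≤ i₀) (hi₀' : i₀ ≤ 2 * d) (Id Φ₁ Φ₂ : ANN)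
    (hIdarch : Id.arch = [d, i₀, d])
    (hIdreal : ∀ x : Fin d → ℝ, Id.realizeFun a d d x = x)
    (h1in : Φ₁.dims 0 = d) (h1out : Φ₁.dims Φ₁.depth = d)
    (h2in : Φ₂.dims 0 = d) (h2out : Φ₂.dims Φ₂.depth = d)
    (hwidth : Φ₂.dims Φ₂.hidden ≤ Φ₁.dims Φ₁.hidden + i₀) :
    ∃ Ψ : ANN,
      Ψ.dims 0 = d ∧ Ψ.dims Ψ.depth = d ∧
      Continuous (Ψ.realizeFun a d d) ∧
      (∀ x : Fin d → ℝ,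
        Ψ.realizeFun a d d x
          = fun i => Φ₂.realizeFun a d d x i
              + Φ₁.realizeFun a d d (Φ₂.realizeFun a d d x) i) ∧
      Ψ.dims Ψ.hidden ≤ Φ₁.dims Φ₁.hidden + i₀ ∧
      (Ψ.params : ℝ) ≤ (Φ₂.params : ℝ) + ((Id.params : ℝ) / 2 + (Φ₁.params : ℝ)) ^ 2 := by
  obtain ⟨hIh, hI0, hI1, hI2⟩ := dims_of_arch_eq hIdarch
  have hPI : Id.params = i₀ * (d + 1) + d * (i₀ + 1) := by
    simp [params, hIh, sum_range_succ, hI0, hI1, hI2]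
  suffices ∃ Γ : ANN, Γ.dims Γ.depth = d ∧
      (∀ z, ∀ i < d, Γ.realize a z i = z i + Φ₁.realize a z i) ∧
      (comp Φ₂ Γ).dims (comp Φ₂ Γ).hidden ≤ Φ₁.dims Φ₁.hidden + i₀ ∧
      4 * (comp Φ₂ Γ).params ≤ 4 * Φ₂.params + (Id.params + 2 * Φ₁.params) ^ 2 by
    obtain ⟨Γ, hΓout, hΓ, hΨwidth, hΨparams⟩ := this
    refine ⟨comp Φ₂ Γ, (dims_comp_of_le _ _ (Nat.zero_le _)).trans h2in,
      (dims_comp_depth _ _).trans hΓout, continuous_realizeFun a ha _ d d,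
      realizeFun_comp_eq_add a h1in hΓ, hΨwidth, ?_⟩
    have : (4 * (comp Φ₂ Γ).params : ℝ) ≤ 4 * Φ₂.params + (Id.params + 2 * Φ₁.params) ^ 2 := by
      exact_mod_cast hΨparams
    linarith
  by_cases hdeg : Φ₁.hidden = 0 ∨ ∃ t ≤ Φ₁.hidden, Φ₁.dims t = 0
  · obtain ⟨A, b, hA⟩ := exists_realize_eq_affine a h1in hdeg
    refine ⟨affineSkip d A b, rfl, fun z i hi => by rw [realize_affineSkip a A b z hi, hA], ?_, ?_⟩
    · rwa [dims_comp_hidden_of_hidden_eq_zero _ _ rfl]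
    · rw [params_comp_of_hidden_eq_zero _ _ rfl h2out.symm]
      omega
  · push Not at hdeg
    obtain ⟨m, hm⟩ := Nat.exists_eq_add_one_of_ne_zero hdeg.1
    have hI : ∀ z, ∀ i < d, Id.realize a z i = z i := fun z i hi => by
      rw [realize_eq_realizeFun a Id hI0 d z ⟨i, hi⟩, hIdreal]
    refine ⟨parSum Φ₁ (iterComp Id m), dims_parSum_depth.trans h1out,
      realize_parSum_iterComp a hIh hm (hI0.trans h1in.symm) hI, ?_, ?_⟩
    · rw [dims_comp_hidden_of_hidden_eq_succ _ _ (hidden_parSum.trans hm), hidden_parSum,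
        dims_parSum_iterComp_hidden hIh hm, hI1]
    · rw [hPI]
      exact four_mul_params_comp_le hi₀ hi₀' (by omega) hdeg.2 h1in h1out rfl
        (hI1 ▸ dims_parSum_iterComp_le hIh hm) hwidth

/-- (Lemma 3.19, sum with a skip connection) Given an activation `a`, a network `𝕀` with
architecture `(d, 𝔦, d)` realizing the identity on `ℝ^d` (with `2 ≤ 𝔦 ≤ 2d`), and
networks `Φ₁, Φ₂` with input and output dimension `d` satisfying
`l_{2,L₂-1} ≤ l_{1,L₁-1} + 𝔦`, there exists a network `Ψ` with continuous realization
`x ↦ (R_a(Φ₂))(x) + (R_a(Φ₁))((R_a(Φ₂))(x))`, penultimate layer width at most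
`l_{1,L₁-1} + 𝔦`, and `P(Ψ) ≤ P(Φ₂) + (½ P(𝕀) + P(Φ₁))²`. -/
theorem composition_sum (a : ℝ → ℝ) (ha : Continuous a) (d i₀ : ℕ) (hd : 0 < d)
    (hi₀ : 2 ≤ i₀) (hi₀' : i₀ ≤ 2 * d) (Id Φ₁ Φ₂ : ANN)
    (hIdarch : Id.arch = [d, i₀, d])
    (hIdreal : ∀ x : Fin d → ℝ, Id.realizeFun a d d x = x)
    (h1in : Φ₁.dims 0 = d) (h1out : Φ₁.dims Φ₁.depth = d)
    (h2in : Φ₂.dims 0 = d) (h2out : Φ₂.dims Φ₂.depth = d)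
    (hwidth : Φ₂.dims Φ₂.hidden ≤ Φ₁.dims Φ₁.hidden + i₀) :
    ∃ Ψ : ANN,
      Ψ.dims 0 = d ∧ Ψ.dims Ψ.depth = d ∧
      Continuous (Ψ.realizeFun a d d) ∧
      (∀ x : Fin d → ℝ,
        Ψ.realizeFun a d d x
          = fun i => Φ₂.realizeFun a d d x i
              + Φ₁.realizeFun a d d (Φ₂.realizeFun a d d x) i) ∧
      Ψ.dims Ψ.hidden ≤ Φ₁.dims Φ₁.hidden + i₀ ∧
      (Ψ.params : ℝ) ≤ (Φ₂.params : ℝ) + ((Id.params : ℝ) / 2 + (Φ₁.params : ℝ)) ^ 2 :=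
  composition_sum_general a ha d i₀ hi₀ hi₀' Id Φ₁ Φ₂ hIdarch hIdreal h1in h1out h2in h2out hwidth
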